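/- Let S be an n×n unitary Hermitian complex matrix (n ≥ 2) such that every diagonal entry of S equals 1 − 2/n and every off-diagonal entry has modulus 2/n. Then there exist real numbers ξ₂,…,ξₙ such that S = D⁻¹(I − (2/n)J)D, where D = diag(1, e^{iξ₂},…, e^{iξₙ}) and J is the n×n all-ones matrix. -/

import Mathlib

/-!
`S² = SSᴴ = 1`, so `P = (1 - S)/2` is idempotent, and all its entries have modulus `1/n`.
In `P j l = ∑ k, P j k * P k l` the `n` terms have modulus `1/n²` while the sum has modulus
`1/n`: this is the equality case of the triangle inequality, so every term equals `P j l / n`.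
Taking `j = 0`, the numbers `e k = n * P 0 k` are unimodular with `e j * P j l = e l / n`,
i.e. `P = D⁻¹ (J/n) D` for `D = diagonal e`; the phases are `ξ k = arg (P 0 k)`, and
`ξ 0 = 0` because `P 0 0 = 1/n > 0`.
-/

open Matrix Complex

open RealInnerProductSpace in
theorem Finset.card_smul_eq_sum_of_norm_sum_eq {ι E : Type*} [NormedAddCommGroup E]
    [InnerProductSpace ℝ E] {s : Finset ι} {z : ι → E} {r : ℝ}
    (hz : ∀ k ∈ s, ‖z k‖ = r) (hsum : ‖∑ k ∈ s, z k‖ = s.card * r) :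
    ∀ k ∈ s, (s.card : ℝ) • z k = ∑ i ∈ s, z i := by
  set w := ∑ i ∈ s, z i
  set N : ℝ := (s.card : ℝ)
  -- the squared distances of the rescaled terms to the sum add up to `N³ r² - N ‖w‖² = 0`
  have hdist : ∑ k ∈ s, ‖N • z k - w‖ ^ 2 = 0 := by
    calc ∑ k ∈ s, ‖N • z k - w‖ ^ 2
        = ∑ k ∈ s, (N ^ 2 * r ^ 2 - 2 * N * ⟪z k, w⟫ + ‖w‖ ^ 2) := by
          refine Finset.sum_congr rfl fun k hk => ?_
          rw [norm_sub_sq_real, norm_smul, real_inner_smul_left, Real.norm_natCast, hz k hk]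
          ring
      _ = N * (N ^ 2 * r ^ 2) - 2 * N * ⟪w, w⟫ + N * ‖w‖ ^ 2 := by
          rw [Finset.sum_add_distrib, Finset.sum_sub_distrib,
            ← Finset.mul_sum s (fun k => ⟪z k, w⟫), ← sum_inner]
          simp only [Finset.sum_const, nsmul_eq_mul]; rfl
      _ = 0 := by rw [real_inner_self_eq_norm_sq, hsum]; ring
  intro k hk
  rw [← sub_eq_zero, ← norm_eq_zero, ← sq_eq_zero_iff]
  exact (Finset.sum_eq_zero_iff_of_nonneg fun _ _ => sq_nonneg _).mp hdist k hk

theorem IsIdempotentElem.inv_two_smul_one_sub {K R : Type*} [Field K] [Ring R] [Algebra K R]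
    (h2 : (2 : K) ≠ 0) {s : R} (hs : s * s = 1) :
    IsIdempotentElem ((2 : K)⁻¹ • (1 - s)) := by
  have hsq : (1 - s) * (1 - s) = (2 : K) • (1 - s) := by
    rw [sub_mul, mul_sub, mul_sub, hs, one_mul, one_mul, mul_one, two_smul]; abel
  rw [IsIdempotentElem, smul_mul_smul_comm, hsq, smul_smul]
  congr 1; field_simp

theorem Matrix.inv_diagonal_mul_mul_diagonal_apply {ι K : Type*} [Fintype ι] [DecidableEq ι]
    [Field K] {v : ι → K} (hv : ∀ i, v i ≠ 0) (A : Matrix ι ι K) (j l : ι) :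
    ((diagonal v)⁻¹ * A * diagonal v) j l = (v j)⁻¹ * A j l * v l := by
  have hinv : (diagonal v)⁻¹ = diagonal fun i => (v i)⁻¹ :=
    inv_eq_left_inv (by rw [diagonal_mul_diagonal]; simp [hv])
  rw [hinv, mul_diagonal, diagonal_mul]

theorem Matrix.card_mul_mul_apply_of_isIdempotentElem {ι : Type*} [Fintype ι]
    {P : Matrix ι ι ℂ} (hP : IsIdempotentElem P)
    (hnorm : ∀ j l, ‖P j l‖ = (Fintype.card ι : ℝ)⁻¹) (j k l : ι) :
    (Fintype.card ι : ℂ) * (P j k * P k l) = P j l := by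
  have hsum : ∑ i, P j i * P i l = P j l := by rw [← mul_apply, hP.eq]
  have hterm := Finset.card_smul_eq_sum_of_norm_sum_eq (s := Finset.univ)
    (z := fun i => P j i * P i l) (r := (Fintype.card ι : ℝ)⁻¹ ^ 2)
    (fun i _ => by rw [norm_mul, hnorm, hnorm, sq])
    (by rw [hsum, hnorm, Finset.card_univ]; field_simp) k (Finset.mem_univ k)
  rw [Finset.card_univ, hsum, Complex.real_smul] at hterm
  exact_mod_cast hterm

theorem Matrix.apply_eq_of_isIdempotentElem_of_norm_eq {ι : Type*} [Fintype ι]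
    {P : Matrix ι ι ℂ} (hP : IsIdempotentElem P)
    (hnorm : ∀ j l, ‖P j l‖ = (Fintype.card ι : ℝ)⁻¹) (i₀ j l : ι) :
    P j l =
      (exp (I * arg (P i₀ j)))⁻¹ * (Fintype.card ι : ℂ)⁻¹ * exp (I * arg (P i₀ l)) := by
  have : Nonempty ι := ⟨j⟩
  have hN : (Fintype.card ι : ℂ) ≠ 0 := Nat.cast_ne_zero.mpr Fintype.card_ne_zero
  have hphase : ∀ k, exp (I * arg (P i₀ k)) = Fintype.card ι * P i₀ k := by
    intro k
    have := norm_mul_exp_arg_mul_I (P i₀ k)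
    rw [hnorm, mul_comm (arg _ : ℂ)] at this
    push_cast at this
    field_simp at this
    linear_combination this
  have hP0 : P i₀ j ≠ 0 := norm_ne_zero_iff.mp (by rw [hnorm]; positivity)
  rw [hphase, hphase, ← card_mul_mul_apply_of_isIdempotentElem hP hnorm i₀ j l]
  field_simp

/-- An n×n unitary Hermitian matrix with all diagonal entries 1−2/n and all off-diagonal
entries of modulus 2/n is diagonally equivalent to I − (2/n)J. -/
theorem stmt_5 (n : ℕ) (hn : 2 ≤ n) (S : Matrix (Fin n) (Fin n) ℂ)
    (hu : S * Sᴴ = 1) (hh : Sᴴ = S)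
    (hdiag : ∀ j, S j j = 1 - 2 / n)
    (hoff : ∀ j l, j ≠ l → ‖S j l‖ = 2 / n) :
    ∃ ξ : Fin n → ℝ, ξ ⟨0, by omega⟩ = 0 ∧
      S = (Matrix.diagonal fun j => Complex.exp (Complex.I * ξ j))⁻¹
          * (1 - (2 / n : ℂ) • Matrix.of (fun _ _ => (1 : ℂ)))
          * (Matrix.diagonal fun j => Complex.exp (Complex.I * ξ j)) := by
  set P : Matrix (Fin n) (Fin n) ℂ := (2 : ℂ)⁻¹ • (1 - S)
  have hP : IsIdempotentElem P := .inv_two_smul_one_sub two_ne_zero (by rw [← hu, hh])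
  have hPapply : ∀ j l, P j l = 2⁻¹ * ((1 : Matrix (Fin n) (Fin n) ℂ) j l - S j l) :=
    fun _ _ => rfl
  have hPdiag : ∀ j, P j j = (n : ℂ)⁻¹ := by
    intro j; rw [hPapply, one_apply_eq, hdiag]; field_simp; ring
  have hPnorm : ∀ j l, ‖P j l‖ = (Fintype.card (Fin n) : ℝ)⁻¹ := by
    intro j l
    rw [Fintype.card_fin]
    rcases eq_or_ne j l with rfl | hjl
    · simp [hPdiag]
    · rw [hPapply, one_apply_ne hjl, norm_mul, zero_sub, norm_neg, hoff j l hjl]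
      norm_num
      ring
  set i₀ : Fin n := ⟨0, by omega⟩
  refine ⟨fun k => arg (P i₀ k), ?_, ?_⟩
  · show arg (P i₀ i₀) = 0
    rw [hPdiag, ← ofReal_natCast, ← ofReal_inv]
    exact arg_ofReal_of_nonneg (by positivity)
  · ext j l
    have hS : S j l = (1 : Matrix (Fin n) (Fin n) ℂ) j l - 2 * P j l := by rw [hPapply]; ring
    rw [inv_diagonal_mul_mul_diagonal_apply (fun _ => exp_ne_zero _), hS,
      apply_eq_of_isIdempotentElem_of_norm_eq hP hPnorm i₀ j l, Fintype.card_fin]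
    simp only [Matrix.sub_apply, Matrix.smul_apply, of_apply, smul_eq_mul, mul_one]
    rcases eq_or_ne j l with rfl | hjl
    · rw [one_apply_eq]
      field_simp [exp_ne_zero]
    · rw [one_apply_ne hjl]
      ring
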